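/- Let w ∈ ℝ^d be nonzero with Euclidean norm ‖w‖ and β > 0. Then for every x ∈ ℝ^d, ∫_ℝ p_β(ε) · relu(⟨w, x⟩ − ‖w‖·ε) dε = softplus_{β/‖w‖}(⟨w, x⟩). -/

import Mathlib

open MeasureTheory
open scoped RealInnerProductSpace

noncomputable def softplus (β t : ℝ) : ℝ := (1 / β) * Real.log (1 + Real.exp (β * t))

noncomputable def pdens (β ε : ℝ) : ℝ :=
  β / (Real.exp (β * ε / 2) + Real.exp (-(β * ε / 2))) ^ 2

noncomputable def relu (t : ℝ) : ℝ := max t 0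

/-! The density `p_β` is the derivative of the logistic function `ε ↦ σ(βε)`, and `σ(βt)` is
the derivative of `softplus β`. Substituting `ε = t - u`, the function
`u ↦ -(softplus β (t - u) + u σ(β(t - u)))` is an antiderivative of `p_β(t - u) u` which is
increasing on `(0, ∞)` and tends to `0` at infinity, so `∫ p_β(ε) relu(t - ε) dε = softplus β t`.
The theorem follows by pulling `‖w‖` out of the ReLU and rescaling `softplus`. -/

open Real Filter Set Topology

lemma sigmoid_eq_exp_div (x : ℝ) : sigmoid x = exp x / (1 + exp x) := by
  rw [sigmoid_def, exp_neg]
  field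

lemma sigmoid_le_exp (x : ℝ) : sigmoid x ≤ exp x := by
  rw [sigmoid_def, ← inv_inv (exp x), ← exp_neg]
  exact inv_anti₀ (exp_pos _) (le_add_of_nonneg_left zero_le_one)

lemma pdens_eq_mul_sigmoid (β ε : ℝ) :
    pdens β ε = β * (sigmoid (β * ε) * (1 - sigmoid (β * ε))) := by
  rw [← sigmoid_neg, sigmoid_eq_exp_div, sigmoid_eq_exp_div, pdens]
  have h : exp (β * ε) = exp (β * ε / 2) ^ 2 := by rw [← exp_nat_mul]; ring_nf
  rw [exp_neg, exp_neg, h]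
  field

lemma pdens_nonneg {β : ℝ} (hβ : 0 ≤ β) (ε : ℝ) : 0 ≤ pdens β ε := by
  unfold pdens; positivity

lemma hasDerivAt_sigmoid_mul (β ε : ℝ) :
    HasDerivAt (fun ε => sigmoid (β * ε)) (pdens β ε) ε := by
  refine ((hasDerivAt_sigmoid (β * ε)).comp ε ((hasDerivAt_id' ε).const_mul β)).congr_deriv ?_
  rw [pdens_eq_mul_sigmoid]
  ring

lemma hasDerivAt_softplus {β : ℝ} (hβ : β ≠ 0) (t : ℝ) :
    HasDerivAt (softplus β) (sigmoid (β * t)) t := by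
  refine ((((hasDerivAt_id' t).const_mul β).exp.const_add 1).log (by positivity)).const_mul
    (1 / β) |>.congr_deriv ?_
  rw [sigmoid_eq_exp_div]
  field

lemma tendsto_softplus_atBot {β : ℝ} (hβ : 0 < β) : Tendsto (softplus β) atBot (𝓝 0) := by
  have h : Tendsto (fun t => 1 + exp (β * t)) atBot (𝓝 1) := by
    simpa using (tendsto_exp_atBot.comp (tendsto_id.const_mul_atBot hβ)).const_add 1
  unfold softplus
  simpa using ((continuousAt_log one_ne_zero).tendsto.comp h).const_mul (1 / β)

lemma softplus_div (β c t : ℝ) : softplus (β / c) t = c * softplus β (t / c) := by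
  simp only [softplus, one_div_div, div_mul_eq_mul_div, mul_div_assoc]
  ring

lemma relu_mul {c : ℝ} (hc : 0 ≤ c) (t : ℝ) : relu (c * t) = c * relu t := by
  simp only [relu, mul_max_of_nonneg _ _ hc, mul_zero]

lemma hasDerivAt_neg_softplus_sub_add_mul_sigmoid {β : ℝ} (hβ : β ≠ 0) (t u : ℝ) :
    HasDerivAt (fun u => -(softplus β (t - u) + u * sigmoid (β * (t - u))))
      (pdens β (t - u) * u) u := by
  have hsub : HasDerivAt (fun u => t - u) (-1) u := by
    simpa using (hasDerivAt_id' u).const_sub t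
  have hsoftplus := (hasDerivAt_softplus hβ (t - u)).comp u hsub
  have hsigmoid := (hasDerivAt_sigmoid_mul β (t - u)).comp u hsub
  refine (hsoftplus.add ((hasDerivAt_id' u).mul hsigmoid)).neg.congr_deriv ?_
  simp only [Function.comp_apply]
  ring

lemma tendsto_softplus_sub_add_mul_sigmoid {β : ℝ} (hβ : 0 < β) (t : ℝ) :
    Tendsto (fun u => softplus β (t - u) + u * sigmoid (β * (t - u))) atTop (𝓝 0) := by
  have hsub : Tendsto (fun u : ℝ => t - u) atTop atBot := by
    simpa [sub_eq_add_neg] using tendsto_atBot_add_const_left atTop t tendsto_neg_atTop_atBot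
  have hsoftplus := (tendsto_softplus_atBot hβ).comp hsub
  have hdecay : Tendsto (fun u => exp (β * t) * (u * exp (-β * u))) atTop (𝓝 0) := by
    simpa using (tendsto_rpow_mul_exp_neg_mul_atTop_nhds_zero 1 β hβ).const_mul (exp (β * t))
  have hmul : Tendsto (fun u => u * sigmoid (β * (t - u))) atTop (𝓝 0) := by
    refine tendsto_of_tendsto_of_tendsto_of_le_of_le' tendsto_const_nhds hdecay ?_ ?_
    · filter_upwards [eventually_ge_atTop 0] with u hu
      exact mul_nonneg hu (sigmoid_nonneg _)
    · filter_upwards [eventually_ge_atTop 0] with u hu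
      calc u * sigmoid (β * (t - u)) ≤ u * exp (β * (t - u)) :=
            mul_le_mul_of_nonneg_left (sigmoid_le_exp _) hu
        _ = exp (β * t) * (u * exp (-β * u)) := by
          rw [mul_sub, sub_eq_add_neg, exp_add, ← neg_mul]; ring
  simpa using hsoftplus.add hmul

theorem integral_pdens_mul_relu_sub {β : ℝ} (hβ : 0 < β) (t : ℝ) :
    ∫ ε, pdens β ε * relu (t - ε) = softplus β t := by
  calc ∫ ε, pdens β ε * relu (t - ε) = ∫ u, pdens β (t - u) * relu u := by
        simpa only [sub_sub_cancel] using
          integral_sub_left_eq_self (fun u => pdens β (t - u) * relu u) volume t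
    _ = ∫ u in Ioi 0, pdens β (t - u) * u := by
        rw [← setIntegral_eq_integral_of_forall_compl_eq_zero (s := Ioi 0)]
        · refine setIntegral_congr_fun measurableSet_Ioi fun u hu => ?_
          rw [relu, max_eq_left (le_of_lt hu)]
        · intro u hu
          rw [relu, max_eq_right (not_lt.mp hu), mul_zero]
    _ = softplus β t := by
        rw [integral_Ioi_of_hasDerivAt_of_nonneg'
          (fun u _ => hasDerivAt_neg_softplus_sub_add_mul_sigmoid hβ.ne' t u)
          (fun u hu => mul_nonneg (pdens_nonneg hβ.le _) (le_of_lt hu))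
          (tendsto_softplus_sub_add_mul_sigmoid hβ t).neg]
        simp

/-- Let `w ∈ ℝ^d` be nonzero with Euclidean norm `‖w‖` and `β > 0`. Then for every `x ∈ ℝ^d`,
`∫_ℝ p_β(ε) · relu(⟨w, x⟩ − ‖w‖·ε) dε = softplus_{β/‖w‖}(⟨w, x⟩)`. -/
theorem integral_pdens_relu_inner (d : ℕ) (w : EuclideanSpace ℝ (Fin d)) (hw : w ≠ 0)
    (β : ℝ) (hβ : 0 < β) (x : EuclideanSpace ℝ (Fin d)) :
    ∫ ε : ℝ, pdens β ε * relu (⟪w, x⟫ - ‖w‖ * ε) = softplus (β / ‖w‖) ⟪w, x⟫ := by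
  have hw' : 0 < ‖w‖ := norm_pos_iff.mpr hw
  have hscale : ∀ ε, ⟪w, x⟫ - ‖w‖ * ε = ‖w‖ * (⟪w, x⟫ / ‖w‖ - ε) := fun ε => by
    field_simp
  simp_rw [hscale, relu_mul hw'.le, mul_left_comm (pdens β _)]
  rw [integral_const_mul, integral_pdens_mul_relu_sub hβ, softplus_div]
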